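/- arXiv:math/0510470 — 2 statements merged into one kernel-verified Lean document; each statement's English description precedes it below -/
import Mathlib

section
/- Let P_1,…,P_k be polytopes in ℝ^d and let P = P_1 + ⋯ + P_k. A nonempty subset F of P is a face of P if and only if F = F_1 + ⋯ + F_k for some faces F_i of P_i such that there exists a single vector c ∈ ℝ^d with F_i = S(P_i;c) for all i. Furthermore, the decomposition F = F_1 + ⋯ + F_k of any nonempty face F is unique: if F = F_1 + ⋯ + F_k = F_1' + ⋯ + F_k' with F_i = S(P_i;c) and F_i' = S(P_i;c') for vectors c, c', then F_i = F_i' for all i. -/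
open Pointwise RealInnerProductSpace

noncomputable section

abbrev E (d : ℕ) : Type := EuclideanSpace ℝ (Fin d)

def IsPolytope {d : ℕ} (P : Set (E d)) : Prop :=
  ∃ V : Finset (E d), V.Nonempty ∧ P = convexHull ℝ (V : Set (E d))

def maximizers {d : ℕ} (P : Set (E d)) (c : E d) : Set (E d) :=
  {x ∈ P | ∀ y ∈ P, ⟪y, c⟫ ≤ ⟪x, c⟫}

def IsFace {d : ℕ} (P F : Set (E d)) : Prop :=
  F = ∅ ∨ F = P ∨ ∃ c : E d, c ≠ 0 ∧ F = maximizers P c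

def IsNontrivialFace {d : ℕ} (P F : Set (E d)) : Prop :=
  IsFace P F ∧ F ≠ ∅ ∧ F ≠ P

def polarDual {d : ℕ} (P : Set (E d)) : Set (E d) :=
  {x | ∀ y ∈ P, ⟪x, y⟫ ≤ 1}

def dualFace {d : ℕ} (P F : Set (E d)) : Set (E d) :=
  {x ∈ polarDual P | ∀ f ∈ F, ⟪x, f⟫ = 1}

def normalCone {d : ℕ} (P F : Set (E d)) : Set (E d) :=
  {c | maximizers P c = F}

def IsPerfectlyCentered {d : ℕ} (P : Set (E d)) : Prop :=
  ∀ F : Set (E d), IsFace P F → F.Nonempty →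
    (intrinsicInterior ℝ F ∩ normalCone P F).Nonempty

def dimSet {d : ℕ} (F : Set (E d)) : ℕ :=
  Module.finrank ℝ (affineSpan ℝ F).direction

def fVec {d : ℕ} (P : Set (E d)) (k : ℕ) : ℕ :=
  {F : Set (E d) | IsFace P F ∧ F.Nonempty ∧ dimSet F = k}.ncard


lemma maximizers_zero' {d : ℕ} (P : Set (E d)) : maximizers P 0 = P := by
  simp [maximizers]

lemma mem_maximizers_of_sum' {d k : ℕ} {P : Fin k → Set (E d)} {c : E d} {g : Fin k → E d}
    (hg : ∀ i, g i ∈ P i) (hz : ∑ i, g i ∈ maximizers (∑ i, P i) c) (j : Fin k) :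
    g j ∈ maximizers (P j) c := by
  refine ⟨hg j, fun y hy => ?_⟩
  classical
  set w := Function.update g j y with hw
  have hwmem : ∑ i, w i ∈ ∑ i, P i := by
    rw [Set.mem_fintype_sum]
    refine ⟨w, fun i => ?_, rfl⟩
    by_cases h : i = j
    · subst h; simpa [hw] using hy
    · simpa [hw, Function.update_of_ne h] using hg i
  have hle := hz.2 _ hwmem
  have h1 : ∑ i, w i = y + ∑ i ∈ Finset.univ.erase j, g i := by
    rw [hw, Finset.sum_update_of_mem (Finset.mem_univ j), Finset.sdiff_singleton_eq_erase]
  have h2 : ∑ i, g i = g j + ∑ i ∈ Finset.univ.erase j, g i :=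
    (Finset.add_sum_erase _ _ (Finset.mem_univ j)).symm
  rw [h1, h2, inner_add_left, inner_add_left] at hle
  linarith

lemma maximizers_sum' {d k : ℕ} (P : Fin k → Set (E d)) (c : E d) :
    maximizers (∑ i, P i) c = ∑ i, maximizers (P i) c := by
  apply Set.Subset.antisymm
  · intro z hz
    obtain ⟨g, hg, rfl⟩ := Set.mem_fintype_sum _ _ |>.mp hz.1
    rw [Set.mem_fintype_sum]
    exact ⟨g, fun j => mem_maximizers_of_sum' hg hz j, rfl⟩
  · intro z hz
    obtain ⟨g, hg, rfl⟩ := Set.mem_fintype_sum _ _ |>.mp hz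
    refine ⟨Set.finset_sum_mem_finset_sum _ _ _ (fun i _ => (hg i).1), fun y hy => ?_⟩
    obtain ⟨h, hh, rfl⟩ := Set.mem_fintype_sum _ _ |>.mp hy
    rw [sum_inner, sum_inner]
    exact Finset.sum_le_sum fun i _ => (hg i).2 _ (hh i)

lemma maximizers_subset_of_eq' {d k : ℕ} {P : Fin k → Set (E d)} {F : Set (E d)}
    (hF : F.Nonempty) {c c' : E d} (h1 : F = ∑ i, maximizers (P i) c)
    (h2 : F = ∑ i, maximizers (P i) c') (i : Fin k) :
    maximizers (P i) c ⊆ maximizers (P i) c' := by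
  classical
  intro x hx
  obtain ⟨z, hz⟩ := hF
  rw [h1, Set.mem_fintype_sum] at hz
  obtain ⟨g, hg, rfl⟩ := hz
  set w := Function.update g i x with hwdef
  have hwm : ∀ j, w j ∈ maximizers (P j) c := by
    intro j
    by_cases h : j = i
    · subst h; simpa [hwdef] using hx
    · simpa [hwdef, Function.update_of_ne h] using hg j
  have hsum : ∑ j, w j ∈ F := by
    rw [h1]
    exact Set.finset_sum_mem_finset_sum _ _ _ (fun j _ => hwm j)
  have hmax : ∑ j, w j ∈ maximizers (∑ j, P j) c' := by
    rw [maximizers_sum', ← h2]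
    exact hsum
  have := mem_maximizers_of_sum' (fun j => (hwm j).1) hmax i
  simpa [hwdef] using this

theorem face_decomposition_of_minkowski_sum {d k : ℕ} (P : Fin k → Set (E d))
    (hP : ∀ i, IsPolytope (P i)) (F : Set (E d))
    (hF : F.Nonempty) (hFsub : F ⊆ ∑ i, P i) :
    (IsFace (∑ i, P i) F ↔
      ∃ c : E d, (∀ i, IsFace (P i) (maximizers (P i) c)) ∧
        F = ∑ i, maximizers (P i) c) ∧
    (∀ c c' : E d, F = (∑ i, maximizers (P i) c) →
      F = (∑ i, maximizers (P i) c') →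
      ∀ i, maximizers (P i) c = maximizers (P i) c') := by
  constructor
  · constructor
    · rintro (rfl | rfl | ⟨c, hc, rfl⟩)
      · exact absurd rfl hF.ne_empty
      · refine ⟨0, fun i => Or.inr (Or.inl (maximizers_zero' _)), ?_⟩
        simp [maximizers_zero']
      · exact ⟨c, fun i => Or.inr (Or.inr ⟨c, hc, rfl⟩), maximizers_sum' P c⟩
    · rintro ⟨c, hfaces, rfl⟩
      by_cases hc : c = 0
      · subst hc
        right; left
        simp [maximizers_zero']
      · exact Or.inr (Or.inr ⟨c, hc, (maximizers_sum' P c).symm⟩)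
  · intro c c' h1 h2 i
    exact (maximizers_subset_of_eq' hF h1 h2 i).antisymm
      (maximizers_subset_of_eq' hF h2 h1 i)
end
end

section
/- If P is a full-dimensional perfectly centered polytope in ℝ^d, then its Nesterov rounding P + P* is also a full-dimensional perfectly centered polytope. -/
open Pointwise RealInnerProductSpace

noncomputable section

/-!
Write `S(K; c)` for the set of maximizers of `⟪·, c⟫` on `K`, and call `x` a centre of the face
`F` if `x ∈ relint F` and `S(K; x) = F`; perfect centering says that every nonempty face has a
centre. Since `S(P + P*; c) = S(P; c) + S(P*; c)` and relative interiors add up, for `c ≠ 0` it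
suffices to find `x ∈ relint S(P; c)` and `y ∈ relint S(P*; c)` with `S(P; x + y) = S(P; c)` and
`S(P*; x + y) = S(P*; c)`. Take for `x` and `y` centres of these faces (`P*` is perfectly centered
as well: if `x` is a centre of a face of `P`, then `x / ‖x‖²` is a centre of the face `S(P*; x)`).
The two equalities then reduce to `S(P; c) ⊆ S(P; y)` and `S(P*; c) ⊆ S(P*; x)`.

Both inclusions come from one property of a perfectly centered polytope
`K = {p | ⟪p, w⟫ ≤ 1 for w ∈ W}`: if `v ∈ S(K; c)` then `S(K; v) ⊆ S(K; c)`. It is applied to the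
point `c / ⟪y, c⟫` of `S(P; y)`, and symmetrically. To prove it, let `x₀` be a centre of `S(K; c)`
and follow the ray from `x₀` through `v` until it leaves `K` through a hyperplane `⟪·, w⟫ = 1` at
a point `b`. Then `b` lies in the smaller face `S(K; c + w)`, so by induction
`S(K; b) ⊆ S(K; c)`; and `v` is a positive combination of `x₀` and `b`, whose faces are nested,
so `S(K; v) = S(K; b)`.
-/

open Set Filter Topology

section IntrinsicInterior

variable {X : Type*} [NormedAddCommGroup X] [NormedSpace ℝ X] {s t : Set X} {x y z : X}

theorem mem_intrinsicInterior_iff_mem_nhdsWithin :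
    y ∈ intrinsicInterior ℝ s ↔ y ∈ s ∧ s ∈ 𝓝[affineSpan ℝ s] y := by
  constructor
  · rintro ⟨y, hy, rfl⟩
    exact ⟨intrinsicInterior_subset ⟨y, hy, rfl⟩,
      preimage_coe_mem_nhds_subtype.1 (mem_interior_iff_mem_nhds.1 hy)⟩
  · rintro ⟨hys, hs⟩
    exact ⟨⟨y, subset_affineSpan ℝ s hys⟩,
      mem_interior_iff_mem_nhds.2 (preimage_coe_mem_nhds_subtype.2 hs), rfl⟩

theorem mem_interior_of_mem_intrinsicInterior (hs : affineSpan ℝ s = ⊤)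
    (hy : y ∈ intrinsicInterior ℝ s) : y ∈ interior s := by
  have := (mem_intrinsicInterior_iff_mem_nhdsWithin.1 hy).2
  rwa [hs, AffineSubspace.top_coe, nhdsWithin_univ, ← mem_interior_iff_mem_nhds] at this

theorem eventually_add_smul_sub_mem_of_mem_intrinsicInterior (hy : y ∈ intrinsicInterior ℝ s)
    (hz : z ∈ s) : ∀ᶠ t in 𝓝 (0 : ℝ), y + t • (y - z) ∈ s := by
  obtain ⟨hys, hs⟩ := mem_intrinsicInterior_iff_mem_nhdsWithin.1 hy
  have hspan := subset_affineSpan ℝ s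
  refine (tendsto_nhdsWithin_iff.2 ⟨?_, Eventually.of_forall fun t => ?_⟩).eventually_mem hs
  · simpa using (tendsto_id.smul_const (y - z)).const_add y (x := 𝓝 (0 : ℝ))
  · simpa [add_comm] using
      AffineSubspace.smul_vsub_vadd_mem _ t (hspan hys) (hspan hz) (hspan hys)

theorem mem_intrinsicInterior_of_add_smul_sub_mem (hs : Convex ℝ s)
    (hx : x ∈ intrinsicInterior ℝ s) (hy : y ∈ s) {ε : ℝ} (hε : 0 < ε)
    (hyε : y + ε • (y - x) ∈ s) : y ∈ intrinsicInterior ℝ s := by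
  obtain ⟨hxs, hsx⟩ := mem_intrinsicInterior_iff_mem_nhdsWithin.1 hx
  have hspan := subset_affineSpan ℝ s
  obtain ⟨r, hr⟩ : ∃ r : ℝ, ε * r = 1 + ε := ⟨(1 + ε) / ε, by field_simp⟩
  -- a point `z` near `y` is a convex combination of `y + ε • (y - x)` and a point near `x`
  have hφ : Tendsto (fun z => x + r • (z - y)) (𝓝[affineSpan ℝ s] y)
      (𝓝[affineSpan ℝ s] x) := by
    refine tendsto_nhdsWithin_iff.2 ⟨?_, eventually_mem_nhdsWithin.mono fun z hz => ?_⟩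
    · have : Continuous fun z => x + r • (z - y) := by fun_prop
      simpa using (this.tendsto y).mono_left nhdsWithin_le_nhds
    · simpa [add_comm] using AffineSubspace.smul_vsub_vadd_mem _ r hz (hspan hy) (hspan hxs)
  refine mem_intrinsicInterior_iff_mem_nhdsWithin.2
    ⟨hy, (hφ.eventually_mem hsx).mono fun z hz => ?_⟩
  have hcomb : z = (1 + ε)⁻¹ • (y + ε • (y - x)) + (ε / (1 + ε)) • (x + r • (z - y)) := by
    match_scalars <;> field_simp <;> linarith
  rw [hcomb]
  exact hs hyε hz (by positivity) (by positivity) (by field_simp)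

theorem add_mem_intrinsicInterior_add [FiniteDimensional ℝ X] (hs : Convex ℝ s)
    (ht : Convex ℝ t) (hx : x ∈ intrinsicInterior ℝ s) (hy : y ∈ intrinsicInterior ℝ t) :
    x + y ∈ intrinsicInterior ℝ (s + t) := by
  have hxy : x + y ∈ s + t :=
    add_mem_add (intrinsicInterior_subset hx) (intrinsicInterior_subset hy)
  obtain ⟨z, hz⟩ := Set.Nonempty.intrinsicInterior (hs.add ht) ⟨_, hxy⟩
  obtain ⟨a, ha, b, hb, rfl⟩ := intrinsicInterior_subset hz
  obtain ⟨ε, hε, hxε, hyε⟩ := ((eventually_add_smul_sub_mem_of_mem_intrinsicInterior hx ha).and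
    (eventually_add_smul_sub_mem_of_mem_intrinsicInterior hy hb)).exists_gt
  refine mem_intrinsicInterior_of_add_smul_sub_mem (hs.add ht) hz hxy hε ?_
  convert add_mem_add hxε hyε using 1
  module

end IntrinsicInterior

section Maximizers

variable {d : ℕ} {K A B : Set (E d)} {a b c v x y : E d}

theorem maximizers_subset : maximizers K c ⊆ K := fun _ hx => hx.1

theorem maximizers_zero : maximizers K 0 = K := by
  ext x
  simp [maximizers]

theorem maximizers_smul {t : ℝ} (ht : 0 < t) : maximizers K (t • c) = maximizers K c := by
  ext x
  simp only [maximizers, mem_ofPred_eq, real_inner_smul_right, mul_le_mul_iff_right₀ ht]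

theorem maximizers_subset_maximizers_smul {t : ℝ} (ht : 0 ≤ t) :
    maximizers K c ⊆ maximizers K (t • c) := by
  rcases ht.eq_or_lt with rfl | ht
  · simpa [maximizers_zero] using maximizers_subset
  · rw [maximizers_smul ht]

theorem inner_eq_of_mem_maximizers (hx : x ∈ maximizers K c) (hy : y ∈ maximizers K c) :
    ⟪x, c⟫ = ⟪y, c⟫ :=
  le_antisymm (hy.2 x hx.1) (hx.2 y hy.1)

theorem Convex.maximizers (hK : Convex ℝ K) (c : E d) : Convex ℝ (maximizers K c) := by
  intro x hx y hy s t hs ht hst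
  refine ⟨hK hx.1 hy.1 hs ht hst, fun z hz => ?_⟩
  obtain rfl : t = 1 - s := by linarith
  rw [inner_add_left, real_inner_smul_left, real_inner_smul_left]
  nlinarith [hx.2 z hz, hy.2 z hz]

theorem IsCompact.maximizers_nonempty (hK : IsCompact K) (hne : K.Nonempty) (c : E d) :
    (maximizers K c).Nonempty := by
  obtain ⟨x, hx, hmax⟩ := hK.exists_isMaxOn hne
    (continuous_id.inner continuous_const : Continuous fun y : E d => ⟪y, c⟫).continuousOn
  exact ⟨x, hx, fun y hy => hmax hy⟩

theorem maximizers_add : maximizers (A + B) c = maximizers A c + maximizers B c := by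
  ext x
  constructor
  · rintro ⟨⟨a, ha, b, hb, rfl⟩, hmax⟩
    refine ⟨a, ⟨ha, fun a' ha' => ?_⟩, b, ⟨hb, fun b' hb' => ?_⟩, rfl⟩
    · simpa [inner_add_left] using hmax _ (add_mem_add ha' hb)
    · simpa [inner_add_left] using hmax _ (add_mem_add ha hb')
  · rintro ⟨a, ha, b, hb, rfl⟩
    refine ⟨add_mem_add ha.1 hb.1, ?_⟩
    rintro _ ⟨a', ha', b', hb', rfl⟩
    rw [inner_add_left, inner_add_left]
    exact add_le_add (ha.2 a' ha') (hb.2 b' hb')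

theorem maximizers_add_eq_inter (h : (maximizers K a ∩ maximizers K b).Nonempty) :
    maximizers K (a + b) = maximizers K a ∩ maximizers K b := by
  obtain ⟨z, hza, hzb⟩ := h
  ext x
  simp only [maximizers, mem_inter_iff, mem_ofPred_eq, inner_add_right]
  constructor
  · rintro ⟨hx, hmax⟩
    have hz := hmax z hza.1
    have hxa := hza.2 x hx
    have hxb := hzb.2 x hx
    exact ⟨⟨hx, fun y hy => (hza.2 y hy).trans (by linarith)⟩,
      ⟨hx, fun y hy => (hzb.2 y hy).trans (by linarith)⟩⟩
  · rintro ⟨⟨hx, ha⟩, -, hb⟩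
    exact ⟨hx, fun y hy => add_le_add (ha y hy) (hb y hy)⟩

theorem maximizers_add_of_subset (hne : (maximizers K a).Nonempty)
    (h : maximizers K a ⊆ maximizers K b) : maximizers K (a + b) = maximizers K a := by
  rw [maximizers_add_eq_inter (by rwa [inter_eq_left.2 h]), inter_eq_left.2 h]

theorem maximizers_eq_of_add_smul_sub_eq (hne : (maximizers K b).Nonempty)
    (hbx : maximizers K b ⊆ maximizers K x) {T : ℝ} (hT : 1 ≤ T) (hb : x + T • (v - x) = b) :
    maximizers K v = maximizers K b := by
  have hTv : T • v = b + (T - 1) • x := by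
    rw [← hb]
    module
  rw [← maximizers_smul (show 0 < T by linarith), hTv,
    maximizers_add_of_subset hne (hbx.trans (maximizers_subset_maximizers_smul (by linarith)))]

theorem inner_eq_of_mem_intrinsicInterior (hx : x ∈ intrinsicInterior ℝ K)
    (hmax : ∀ y ∈ K, ⟪y, a⟫ ≤ ⟪x, a⟫) (hy : y ∈ K) : ⟪y, a⟫ = ⟪x, a⟫ := by
  obtain ⟨t, ht, hxt⟩ := (eventually_add_smul_sub_mem_of_mem_intrinsicInterior hx hy).exists_gt
  have := hmax _ hxt
  rw [inner_add_left, real_inner_smul_left, inner_sub_left] at this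
  nlinarith [hmax y hy]

end Maximizers

section Polar

variable {d : ℕ} {K : Set (E d)} {c v w x y : E d}

theorem IsPolytope.isCompact (hK : IsPolytope K) : IsCompact K := by
  obtain ⟨V, -, rfl⟩ := hK
  exact V.finite_toSet.isCompact_convexHull ℝ

theorem IsPolytope.convex (hK : IsPolytope K) : Convex ℝ K := by
  obtain ⟨V, -, rfl⟩ := hK
  exact convex_convexHull ℝ _

theorem IsPolytope.nonempty (hK : IsPolytope K) : K.Nonempty := by
  obtain ⟨V, ⟨v, hv⟩, rfl⟩ := hK
  exact ⟨v, subset_convexHull ℝ _ hv⟩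

theorem IsPolytope.add {P Q : Set (E d)} (hP : IsPolytope P) (hQ : IsPolytope Q) :
    IsPolytope (P + Q) := by
  obtain ⟨V, hV, rfl⟩ := hP
  obtain ⟨W, hW, rfl⟩ := hQ
  exact ⟨V + W, hV.add hW, by rw [Finset.coe_add, convexHull_add]⟩

theorem polarDual_eq_iInter (K : Set (E d)) : polarDual K = ⋂ y ∈ K, {x | ⟪x, y⟫ ≤ 1} := by
  ext
  simp [polarDual]

theorem convex_polarDual (K : Set (E d)) : Convex ℝ (polarDual K) := by
  intro x hx z hz s t hs ht hst y hy
  obtain rfl : t = 1 - s := by linarith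
  rw [inner_add_left, real_inner_smul_left, real_inner_smul_left]
  nlinarith [hx y hy, hz y hy]

theorem isClosed_polarDual (K : Set (E d)) : IsClosed (polarDual K) := by
  rw [polarDual_eq_iInter]
  exact isClosed_biInter fun y _ =>
    isClosed_le (continuous_id.inner continuous_const) continuous_const

theorem zero_mem_polarDual (K : Set (E d)) : (0 : E d) ∈ polarDual K := by
  simp [polarDual]

theorem polarDual_convexHull (s : Set (E d)) : polarDual (convexHull ℝ s) = polarDual s := by
  refine Subset.antisymm (fun x hx y hy => hx y (subset_convexHull ℝ s hy)) fun x hx y hy => ?_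
  have hconv : Convex ℝ {y : E d | ⟪x, y⟫ ≤ 1} := by
    simpa [polarDual, real_inner_comm] using convex_polarDual {x}
  exact convexHull_min (fun y hy => hx y hy) hconv hy

theorem isBounded_polarDual (h : (0 : E d) ∈ interior K) :
    Bornology.IsBounded (polarDual K) := by
  obtain ⟨r, hr, hball⟩ := Metric.nhds_basis_closedBall.mem_iff.1 (mem_interior_iff_mem_nhds.1 h)
  refine (Metric.isBounded_closedBall (x := 0) (r := r⁻¹)).subset fun q hq => ?_
  rw [mem_closedBall_zero_iff]
  rcases eq_or_ne q 0 with rfl | hq0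
  · simpa using hr.le
  have hqn : 0 < ‖q‖ := norm_pos_iff.2 hq0
  have hle := hq ((r / ‖q‖) • q) (hball (by
    rw [mem_closedBall_zero_iff, norm_smul, Real.norm_of_nonneg (by positivity),
      div_mul_cancel₀ _ hqn.ne']))
  rw [real_inner_smul_right, real_inner_self_eq_norm_sq] at hle
  rw [← one_div, le_div_iff₀ hr]
  calc ‖q‖ * r = r / ‖q‖ * ‖q‖ ^ 2 := by field_simp
    _ ≤ 1 := hle

theorem zero_mem_interior_polarDual (h : Bornology.IsBounded K) :
    (0 : E d) ∈ interior (polarDual K) := by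
  obtain ⟨R, hR, hKR⟩ := h.subset_closedBall_lt 0 0
  refine mem_interior_iff_mem_nhds.2
    (Metric.mem_nhds_iff.2 ⟨R⁻¹, by positivity, fun x hx y hy => ?_⟩)
  calc ⟪x, y⟫ ≤ ‖x‖ * ‖y‖ := real_inner_le_norm x y
    _ ≤ R⁻¹ * R := mul_le_mul (mem_ball_zero_iff.1 hx).le (mem_closedBall_zero_iff.1 (hKR hy))
        (norm_nonneg _) (by positivity)
    _ = 1 := inv_mul_cancel₀ hR.ne'

theorem isCompact_polarDual (h : (0 : E d) ∈ interior K) : IsCompact (polarDual K) :=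
  Metric.isCompact_of_isClosed_isBounded (isClosed_polarDual K) (isBounded_polarDual h)

theorem polarDual_polarDual (hc : Convex ℝ K) (hcl : IsClosed K) (h0 : (0 : E d) ∈ K) :
    polarDual (polarDual K) = K := by
  refine Subset.antisymm (fun z hz => ?_) fun y hy q hq => real_inner_comm q y ▸ hq y hy
  by_contra hzK
  obtain ⟨f, s, hfK, hfz⟩ := geometric_hahn_banach_closed_point hc hcl hzK
  have hs : 0 < s := by simpa using hfK 0 h0
  set u := (InnerProductSpace.toDual ℝ (E d)).symm f
  have hu : ∀ x, ⟪u, x⟫ = f x := fun x => InnerProductSpace.toDual_symm_apply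
  have hsu : s⁻¹ • u ∈ polarDual K := fun y hy => by
    rw [real_inner_smul_left, hu, inv_mul_le_iff₀ hs, mul_one]
    exact (hfK y hy).le
  have := hz _ hsu
  rw [real_inner_smul_right, real_inner_comm, hu, inv_mul_le_iff₀ hs, mul_one] at this
  linarith

theorem inner_pos_of_mem_maximizers (h0 : (0 : E d) ∈ interior K) (hc : c ≠ 0)
    (hx : x ∈ maximizers K c) : 0 < ⟪x, c⟫ := by
  have hray : Tendsto (fun t : ℝ => t • c) (𝓝 0) (𝓝 0) := by
    simpa using (tendsto_id (x := 𝓝 (0 : ℝ))).smul_const c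
  obtain ⟨t, ht, htc⟩ := (hray.eventually_mem (mem_interior_iff_mem_nhds.1 h0)).exists_gt
  have hle := hx.2 _ htc
  rw [real_inner_smul_left, real_inner_self_eq_norm_sq] at hle
  have : 0 < ‖c‖ := norm_pos_iff.2 hc
  exact lt_of_lt_of_le (by positivity) hle

theorem inv_inner_smul_mem_maximizers_polarDual (hx : x ∈ maximizers K c) (hc : 0 < ⟪x, c⟫) :
    ⟪x, c⟫⁻¹ • c ∈ maximizers (polarDual K) x := by
  refine ⟨fun p hp => ?_, fun q hq => ?_⟩
  · rw [real_inner_smul_left, real_inner_comm p c, inv_mul_le_iff₀ hc, mul_one]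
    exact hx.2 p hp
  · rw [real_inner_smul_left, real_inner_comm x c, inv_mul_cancel₀ hc.ne']
    exact hq x hx.1

theorem exists_add_smul_sub_mem_polarDual {W : Finset (E d)}
    (hx : x ∈ polarDual (W : Set (E d))) (htight : ∀ w ∈ W, ⟪x, w⟫ = 1 → ⟪y, w⟫ = 1) :
    ∃ ε : ℝ, 0 < ε ∧ x + ε • (x - y) ∈ polarDual (W : Set (E d)) := by
  have hev : ∀ w ∈ W, ∀ᶠ t in 𝓝 (0 : ℝ), ⟪x + t • (x - y), w⟫ ≤ 1 := by
    intro w hw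
    rcases (hx w hw).eq_or_lt with h | h
    · refine Eventually.of_forall fun t => ?_
      rw [inner_add_left, real_inner_smul_left, inner_sub_left, h, htight w hw h]
      simp
    · have : Tendsto (fun t : ℝ => ⟪x + t • (x - y), w⟫) (𝓝 0) (𝓝 ⟪x, w⟫) := by
        simpa using (((tendsto_id (x := 𝓝 (0 : ℝ))).smul_const (x - y)).const_add x).inner
          (tendsto_const_nhds (x := w))
      exact (this.eventually (eventually_lt_nhds h)).mono fun _ => le_of_lt
  exact ((Finset.eventually_all W).2 hev).exists_gt

theorem exists_add_smul_sub_mem_polarDual_inner_eq_one {W : Finset (E d)}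
    (hW : Bornology.IsBounded (polarDual (W : Set (E d)))) (hx : x ∈ polarDual (W : Set (E d)))
    (hv : v ∈ polarDual (W : Set (E d))) (hxv : x ≠ v) :
    ∃ w ∈ W, ∃ T : ℝ, 1 ≤ T ∧ x + T • (v - x) ∈ polarDual (W : Set (E d)) ∧
      ⟪x + T • (v - x), w⟫ = 1 ∧ ⟪x, w⟫ < 1 := by
  set u := v - x
  have hQ : (W.filter fun w => 0 < ⟪u, w⟫).Nonempty := by
    by_contra hQ
    rw [Finset.not_nonempty_iff_eq_empty, Finset.filter_eq_empty_iff] at hQ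
    obtain ⟨R, hR, hWR⟩ := hW.subset_closedBall_lt 0 0
    have hu : 0 < ‖u‖ := norm_pos_iff.2 (sub_ne_zero.2 hxv.symm)
    -- otherwise the whole ray `x + t • u`, `t ≥ 0`, would lie in the bounded set
    set t := (R + ‖x‖ + 1) / ‖u‖
    have hxt : x + t • u ∈ polarDual (W : Set (E d)) := fun w hw => by
      have ht : 0 ≤ t := by positivity
      rw [inner_add_left, real_inner_smul_left]
      nlinarith [hx w hw, not_lt.1 (hQ hw), ht]
    have h1 := norm_sub_le (x + t • u) x
    rw [add_sub_cancel_left, norm_smul, Real.norm_of_nonneg (by positivity),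
      div_mul_cancel₀ _ hu.ne'] at h1
    linarith [mem_closedBall_zero_iff.1 (hWR hxt)]
  obtain ⟨w, hwQ, hwmin⟩ := Finset.exists_min_image _ (fun w => (1 - ⟪x, w⟫) / ⟪u, w⟫) hQ
  obtain ⟨hwW, hwu⟩ := Finset.mem_filter.1 hwQ
  have hT : 1 ≤ (1 - ⟪x, w⟫) / ⟪u, w⟫ := by
    rw [le_div_iff₀ hwu, one_mul, inner_sub_left]
    linarith [hv w hwW]
  have hxT : ⟪x + ((1 - ⟪x, w⟫) / ⟪u, w⟫) • u, w⟫ = 1 := by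
    rw [inner_add_left, real_inner_smul_left, div_mul_cancel₀ _ hwu.ne']
    ring
  refine ⟨w, hwW, _, hT, fun w' hw' => ?_, hxT, ?_⟩
  · rw [inner_add_left, real_inner_smul_left]
    by_cases hw'u : 0 < ⟪u, w'⟫
    · have := hwmin w' (Finset.mem_filter.2 ⟨hw', hw'u⟩)
      rw [le_div_iff₀ hw'u] at this
      linarith
    · nlinarith [hx w' hw', not_lt.1 hw'u]
  · rw [inner_add_left, real_inner_smul_left] at hxT
    nlinarith

theorem isPolytope_polarDual (hK : IsPolytope K) (h0 : (0 : E d) ∈ interior K) :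
    IsPolytope (polarDual K) := by
  obtain ⟨V, -, rfl⟩ := hK
  have hLV := polarDual_convexHull (V : Set (E d))
  have hLc := isCompact_polarDual h0
  -- an extreme point is determined by the constraints it makes tight
  have hfin : ((polarDual (convexHull ℝ (V : Set (E d)))).extremePoints ℝ).Finite := by
    refine Finite.of_finite_image (f := fun e => {w ∈ V | ⟪e, w⟫ = 1})
      (V.powerset.finite_toSet.subset ?_) fun e₁ he₁ e₂ he₂ heq => ?_
    · rintro _ ⟨e, -, rfl⟩
      exact Finset.mem_coe.2 (Finset.mem_powerset.2 (Finset.filter_subset _ _))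
    have htight : ∀ w ∈ V, ⟪e₁, w⟫ = 1 → ⟪e₂, w⟫ = 1 := fun w hw h =>
      (Finset.mem_filter.1 ((Finset.ext_iff.1 heq w).1 (Finset.mem_filter.2 ⟨hw, h⟩))).2
    obtain ⟨ε, hε, hmem⟩ := exists_add_smul_sub_mem_polarDual (hLV ▸ he₁.1) htight
    have hseg : e₁ ∈ openSegment ℝ e₂ (e₁ + ε • (e₁ - e₂)) :=
      ⟨ε / (1 + ε), 1 / (1 + ε), by positivity, by positivity, by field_simp; ring,
        by match_scalars <;> field_simp; ring⟩
    exact (he₁.2 he₂.1 (hLV ▸ hmem) hseg).symm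
  refine ⟨hfin.toFinset, ?_, ?_⟩
  · exact hfin.toFinset_nonempty.2 (hLc.extremePoints_nonempty ⟨0, zero_mem_polarDual _⟩)
  · rw [hfin.coe_toFinset, ← (hfin.isClosed_convexHull ℝ).closure_eq,
      closure_convexHull_extremePoints hLc (convex_polarDual _)]

theorem inv_inner_self_smul_mem_intrinsicInterior_maximizers_polarDual {V : Finset (E d)}
    (hKV : K = convexHull ℝ (V : Set (E d))) (hx : x ∈ intrinsicInterior ℝ (maximizers K x))
    (hx0 : x ≠ 0) : ⟪x, x⟫⁻¹ • x ∈ intrinsicInterior ℝ (maximizers (polarDual K) x) := by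
  have hxF := intrinsicInterior_subset hx
  have hs : 0 < ⟪x, x⟫ := real_inner_self_pos.2 hx0
  set y := ⟪x, x⟫⁻¹ • x
  have hyD : y ∈ maximizers (polarDual K) x := inv_inner_smul_mem_maximizers_polarDual hxF hs
  have hyx : ⟪y, x⟫ = 1 := by rw [real_inner_smul_left, inv_mul_cancel₀ hs.ne']
  have hDconv := (convex_polarDual K).maximizers x
  obtain ⟨z, hz⟩ := Set.Nonempty.intrinsicInterior hDconv ⟨y, hyD⟩
  have hzD := intrinsicInterior_subset hz
  have hzx : ⟪z, x⟫ = 1 := by rw [inner_eq_of_mem_maximizers hzD hyD, hyx]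
  -- `y` can be pushed away from `z`: every constraint tight at `y` is tight at `z`
  have htight : ∀ w ∈ V, ⟪y, w⟫ = 1 → ⟪z, w⟫ = 1 := by
    intro w hw hyw
    have hwF : w ∈ maximizers K x := by
      refine ⟨hKV ▸ subset_convexHull ℝ _ hw, fun p hp => ?_⟩
      rw [real_inner_smul_left, inv_mul_eq_one₀ hs.ne', ← real_inner_comm x w] at hyw
      rw [← hyw]
      exact hxF.2 p hp
    have hFz : ∀ p ∈ maximizers K x, ⟪p, z⟫ ≤ ⟪x, z⟫ := fun p hp => by
      rw [real_inner_comm z x, hzx, real_inner_comm]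
      exact hzD.1 p hp.1
    rw [real_inner_comm w z, inner_eq_of_mem_intrinsicInterior hx hFz hwF, real_inner_comm z x,
      hzx]
  have hLV : polarDual K = polarDual (V : Set (E d)) := hKV ▸ polarDual_convexHull _
  obtain ⟨ε, hε, hmem⟩ := exists_add_smul_sub_mem_polarDual (hLV ▸ hyD.1) htight
  refine mem_intrinsicInterior_of_add_smul_sub_mem hDconv hz hyD hε ⟨hLV ▸ hmem, fun q hq => ?_⟩
  rw [inner_add_left, hyx, real_inner_smul_left, inner_sub_left, hyx, hzx, sub_self, mul_zero,
    add_zero]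
  exact hq x hxF.1

theorem maximizers_polarDual_eq_of_mem_intrinsicInterior
    (hy : y ∈ intrinsicInterior ℝ (maximizers (polarDual K) w))
    (hx : x ∈ intrinsicInterior ℝ (maximizers K y)) (hw : w ∈ maximizers K y) (hwy : ⟪w, y⟫ = 1) :
    maximizers (polarDual K) x = maximizers (polarDual K) w := by
  have hxH := intrinsicInterior_subset hx
  have hxy : ⟪x, y⟫ = 1 := (inner_eq_of_mem_maximizers hxH hw).trans hwy
  have hyx : y ∈ maximizers (polarDual K) x :=
    ⟨(intrinsicInterior_subset hy).1, fun q hq => by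
      rw [real_inner_comm x y, hxy]
      exact hq x hxH.1⟩
  ext q
  constructor
  · intro hq
    have hqx : ⟪q, x⟫ = 1 := by rw [inner_eq_of_mem_maximizers hq hyx, real_inner_comm, hxy]
    have hHq : ∀ p ∈ maximizers K y, ⟪p, q⟫ ≤ ⟪x, q⟫ := fun p hp => by
      rw [real_inner_comm q x, hqx, real_inner_comm]
      exact hq.1 p hp.1
    have hqw : ⟪q, w⟫ = 1 := by
      rw [real_inner_comm, inner_eq_of_mem_intrinsicInterior hx hHq hw, real_inner_comm, hqx]
    exact ⟨hq.1, fun q' hq' => by rw [hqw]; exact hq' w hw.1⟩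
  · intro hq
    have hqx := inner_eq_of_mem_intrinsicInterior hy (fun q' hq' => hyx.2 q' hq'.1) hq
    exact ⟨hq.1, fun q' hq' => hqx ▸ hyx.2 q' hq'⟩

end Polar

section PerfectlyCentered

variable {d : ℕ} {K L : Set (E d)} {c v y : E d}

theorem IsPerfectlyCentered.exists_mem_intrinsicInterior (hK : IsPerfectlyCentered K)
    (hKc : IsCompact K) (hne : K.Nonempty) (c : E d) :
    ∃ x ∈ intrinsicInterior ℝ (maximizers K c), maximizers K x = maximizers K c := by
  refine hK _ ?_ (hKc.maximizers_nonempty hne c)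
  rcases eq_or_ne c 0 with rfl | hc
  · exact Or.inr (Or.inl maximizers_zero)
  · exact Or.inr (Or.inr ⟨c, hc, rfl⟩)

theorem isPerfectlyCentered_of_forall
    (h : ∀ c : E d, ∃ x ∈ intrinsicInterior ℝ (maximizers K c), maximizers K x = maximizers K c) :
    IsPerfectlyCentered K := by
  rintro F (rfl | rfl | ⟨c, -, rfl⟩) hF
  · exact absurd hF not_nonempty_empty
  · have := h 0
    rw [maximizers_zero] at this
    exact this
  · exact h c

theorem IsPerfectlyCentered.zero_mem_interior (hK : IsPerfectlyCentered K) (hKc : IsCompact K)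
    (hne : K.Nonempty) (hfull : affineSpan ℝ K = ⊤) : (0 : E d) ∈ interior K := by
  obtain ⟨x, hx, hxK⟩ := hK.exists_mem_intrinsicInterior hKc hne 0
  rw [maximizers_zero] at hx hxK
  have hxint := mem_interior_of_mem_intrinsicInterior hfull hx
  suffices x = 0 from this ▸ hxint
  have hray : Tendsto (fun t : ℝ => x + t • x) (𝓝 0) (𝓝 x) := by
    simpa using ((tendsto_id (x := 𝓝 (0 : ℝ))).smul_const x).const_add x
  obtain ⟨t, ht, hxt⟩ := (hray.eventually_mem (mem_interior_iff_mem_nhds.1 hxint)).exists_gt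
  have hxx : x ∈ maximizers K x := by
    rw [hxK]
    exact interior_subset hxint
  have hle := hxx.2 _ hxt
  rw [inner_add_left, real_inner_smul_left] at hle
  exact inner_self_eq_zero.1 (le_antisymm (by nlinarith) real_inner_self_nonneg)

theorem maximizers_subset_of_mem_maximizers {W : Finset (E d)}
    (hKW : K = polarDual (W : Set (E d))) (hK : IsCompact K)
    (hexp : ∀ c : E d, ∃ x ∈ maximizers K c, maximizers K x = maximizers K c)
    (hv : v ∈ maximizers K c) : maximizers K v ⊆ maximizers K c := by
  classical
  induction hn : (W.filter fun w => ∃ p ∈ maximizers K c, ⟪p, w⟫ < 1).card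
    using Nat.strong_induction_on generalizing c v with
  | _ n ih =>
    obtain ⟨x, hx, hxc⟩ := hexp c
    rcases eq_or_ne x v with rfl | hxv
    · exact hxc.le
    subst hKW
    obtain ⟨w, hw, T, hT, hbK, hbw, hxw⟩ :=
      exists_add_smul_sub_mem_polarDual_inner_eq_one hK.isBounded hx.1 hv.1 hxv
    set b := x + T • (v - x)
    have hbc : b ∈ maximizers _ c := ⟨hbK, fun p hp => by
      rw [inner_add_left, real_inner_smul_left, inner_sub_left, inner_eq_of_mem_maximizers hv hx,
        sub_self, mul_zero, add_zero]
      exact hx.2 p hp⟩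
    have hbw' : b ∈ maximizers _ w := ⟨hbK, fun p hp => hbw ▸ hp w hw⟩
    have hface := maximizers_add_eq_inter ⟨b, hbc, hbw'⟩
    -- on the smaller face `S(K; c + w)` the constraint `w` is tight as well
    have hlt : (W.filter fun w' => ∃ p ∈ maximizers (polarDual (W : Set (E d))) (c + w),
        ⟪p, w'⟫ < 1).card < n := by
      rw [← hn]
      refine Finset.card_lt_card ((Finset.ssubset_iff_of_subset fun w' hw' => ?_).2
        ⟨w, Finset.mem_filter.2 ⟨hw, x, hx, hxw⟩, fun hw' => ?_⟩)
      · obtain ⟨hw'W, p, hp, hpw⟩ := Finset.mem_filter.1 hw'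
        exact Finset.mem_filter.2 ⟨hw'W, p, (hface ▸ hp).1, hpw⟩
      · obtain ⟨-, p, hp, hpw⟩ := Finset.mem_filter.1 hw'
        rw [inner_eq_of_mem_maximizers (hface ▸ hp).2 hbw', hbw] at hpw
        exact lt_irrefl _ hpw
    have hbsub : maximizers _ b ⊆ maximizers _ (c + w) :=
      ih _ hlt (by rw [hface]; exact ⟨hbc, hbw'⟩) rfl
    calc maximizers _ v = maximizers _ b :=
          maximizers_eq_of_add_smul_sub_eq (hK.maximizers_nonempty ⟨b, hbK⟩ b)
            (hbsub.trans (hxc ▸ hface ▸ inter_subset_left)) hT rfl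
      _ ⊆ maximizers _ c := hbsub.trans (hface ▸ inter_subset_left)

theorem IsPerfectlyCentered.maximizers_subset_of_mem_maximizers_polarDual {W : Finset (E d)}
    (hK : IsPerfectlyCentered K) (hKL : K = polarDual L) (hKW : K = polarDual (W : Set (E d)))
    (hKc : IsCompact K) (hL0 : (0 : E d) ∈ interior L) (hc : c ≠ 0) (hy : y ∈ maximizers L c) :
    maximizers K c ⊆ maximizers K y := by
  have hγ := inner_pos_of_mem_maximizers hL0 hc hy
  have hw : ⟪y, c⟫⁻¹ • c ∈ maximizers K y :=
    hKL ▸ inv_inner_smul_mem_maximizers_polarDual hy hγ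
  rw [← maximizers_smul (inv_pos.2 hγ)]
  refine maximizers_subset_of_mem_maximizers hKW hKc (fun c' => ?_) hw
  obtain ⟨x, hx, hxc⟩ := hK.exists_mem_intrinsicInterior hKc ⟨_, hw.1⟩ c'
  exact ⟨x, intrinsicInterior_subset hx, hxc⟩

theorem isPerfectlyCentered_polarDual (hKp : IsPolytope K) (h0 : (0 : E d) ∈ interior K)
    (hK : IsPerfectlyCentered K) : IsPerfectlyCentered (polarDual K) := by
  have hKc := hKp.isCompact
  have hKne := hKp.nonempty
  have hLc := isCompact_polarDual h0
  have hL0 := zero_mem_interior_polarDual hKc.isBounded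
  have hLK := polarDual_polarDual hKp.convex hKc.isClosed (interior_subset h0)
  obtain ⟨V, -, hKV⟩ := hKp
  refine isPerfectlyCentered_of_forall fun c => ?_
  rcases eq_or_ne c 0 with rfl | hc
  · exact ⟨0, by rw [maximizers_zero]; exact interior_subset_intrinsicInterior hL0, rfl⟩
  obtain ⟨y, hy⟩ := Set.Nonempty.intrinsicInterior ((convex_polarDual K).maximizers c)
    (hLc.maximizers_nonempty ⟨0, interior_subset hL0⟩ c)
  have hγ := inner_pos_of_mem_maximizers hL0 hc (intrinsicInterior_subset hy)
  have hwH : ⟪y, c⟫⁻¹ • c ∈ maximizers K y :=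
    hLK ▸ inv_inner_smul_mem_maximizers_polarDual (intrinsicInterior_subset hy) hγ
  have hwy : ⟪⟪y, c⟫⁻¹ • c, y⟫ = 1 := by
    rw [real_inner_smul_left, real_inner_comm y c, inv_mul_cancel₀ hγ.ne']
  rw [← maximizers_smul (inv_pos.2 hγ)] at hy ⊢
  -- the centre `x` of the face of `K` exposed by `y` exposes the given face of the dual
  obtain ⟨x, hx, hxy⟩ := hK.exists_mem_intrinsicInterior hKc hKne y
  have hLx := maximizers_polarDual_eq_of_mem_intrinsicInterior hy hx hwH hwy
  have hx0 : x ≠ 0 := by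
    rintro rfl
    simpa [hwy] using inner_eq_of_mem_maximizers (intrinsicInterior_subset hx) hwH
  refine ⟨⟪x, x⟫⁻¹ • x, ?_, by rw [maximizers_smul (inv_pos.2 (real_inner_self_pos.2 hx0)), hLx]⟩
  rw [← hLx]
  exact inv_inner_self_smul_mem_intrinsicInterior_maximizers_polarDual hKV (by rwa [hxy]) hx0

theorem isPerfectlyCentered_add_polarDual (hK : IsPolytope K) (h0 : (0 : E d) ∈ interior K)
    (hpc : IsPerfectlyCentered K) : IsPerfectlyCentered (K + polarDual K) := by
  have hKc := hK.isCompact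
  have hL0 := zero_mem_interior_polarDual hKc.isBounded
  have hLc := isCompact_polarDual h0
  have hLpc := isPerfectlyCentered_polarDual hK h0 hpc
  have hKL := polarDual_polarDual hK.convex hKc.isClosed (interior_subset h0)
  obtain ⟨W, -, hLW⟩ := isPolytope_polarDual hK h0
  obtain ⟨V, -, hKV⟩ := id hK
  refine isPerfectlyCentered_of_forall fun c => ?_
  simp only [maximizers_add]
  rcases eq_or_ne c 0 with rfl | hc
  · refine ⟨0, ?_, rfl⟩
    simpa [maximizers_zero] using add_mem_intrinsicInterior_add hK.convex (convex_polarDual K)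
      (interior_subset_intrinsicInterior h0) (interior_subset_intrinsicInterior hL0)
  obtain ⟨x, hx, hxc⟩ := hpc.exists_mem_intrinsicInterior hKc hK.nonempty c
  obtain ⟨y, hy, hyc⟩ := hLpc.exists_mem_intrinsicInterior hLc ⟨0, interior_subset hL0⟩ c
  have hKy : maximizers K x ⊆ maximizers K y := hxc ▸
    hpc.maximizers_subset_of_mem_maximizers_polarDual hKL.symm
      (by rw [← polarDual_convexHull, ← hLW, hKL]) hKc hL0 hc (intrinsicInterior_subset hy)
  have hLx : maximizers (polarDual K) y ⊆ maximizers (polarDual K) x := hyc ▸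
    hLpc.maximizers_subset_of_mem_maximizers_polarDual rfl
      (by rw [hKV, polarDual_convexHull]) hLc h0 hc (intrinsicInterior_subset hx)
  refine ⟨x + y, add_mem_intrinsicInterior_add (hK.convex.maximizers c)
    ((convex_polarDual K).maximizers c) hx hy, ?_⟩
  rw [maximizers_add_of_subset (hKc.maximizers_nonempty hK.nonempty x) hKy, hxc, add_comm x y,
    maximizers_add_of_subset (hLc.maximizers_nonempty ⟨0, interior_subset hL0⟩ y) hLx, hyc]

end PerfectlyCentered

theorem nesterov_rounding_perfectlyCentered {d : ℕ} (P : Set (E d))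
    (hP : IsPolytope P) (hfull : affineSpan ℝ P = ⊤)
    (hpc : IsPerfectlyCentered P) :
    IsPolytope (P + polarDual P) ∧
    affineSpan ℝ (P + polarDual P) = ⊤ ∧
    IsPerfectlyCentered (P + polarDual P) := by
  have h0 := hpc.zero_mem_interior hP.isCompact hP.nonempty hfull
  refine ⟨hP.add (isPolytope_polarDual hP h0), ?_, isPerfectlyCentered_add_polarDual hP h0 hpc⟩
  exact eq_top_iff.2 (hfull ▸ affineSpan_mono ℝ (subset_add_left P (zero_mem_polarDual P)))
end
end
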